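/- arXiv:1808.10667 — 3 statements merged into one kernel-verified Lean document; each statement's English description precedes it below -/
import Mathlib

section
/- Let n ≥ 1, let W ⊆ {(r,s) ∈ ℝ² : r > 0} be open, let P, Q : W → ℝ be smooth, and let Ω = {(x,y) ∈ ℝⁿ × ℝⁿ : y ≠ 0 and (‖x‖, ⟨x,y⟩/‖y‖) ∈ W}. For (x,y) ∈ Ω define G^k(x,y) = u P(r,s) y^k + u² Q(r,s) x^k for k = 1,…,n, where r = ‖x‖, u = ‖y‖, s = ⟨x,y⟩/u. Then at every point of Ω, Σ_{k=1}^{n} ∂G^k/∂y^k = u·[(n+1)P + 2sQ + (r² − s²)Q_s]. -/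
open scoped RealInnerProductSpace

/-- Partial derivative in the second variable `s` of a function on `ℝ × ℝ`. -/
noncomputable def pds (f : ℝ × ℝ → ℝ) (p : ℝ × ℝ) : ℝ := fderiv ℝ f p (0, 1)

/-- The geodesic spray coefficients `G^k = u P y^k + u² Q x^k` of a spherically
symmetric Finsler metric, with `r = ‖x‖`, `u = ‖y‖`, `s = ⟨x,y⟩/u`. -/
noncomputable def sprayG {n : ℕ} (P Q : ℝ × ℝ → ℝ)
    (x y : EuclideanSpace ℝ (Fin n)) (k : Fin n) : ℝ :=
  ‖y‖ * P (‖x‖, ⟪x, y⟫ / ‖y‖) * y k + ‖y‖ ^ 2 * Q (‖x‖, ⟪x, y⟫ / ‖y‖) * x k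

lemma hasFDerivAt_norm' {n : ℕ} (y : EuclideanSpace ℝ (Fin n)) (hy : y ≠ 0) :
    HasFDerivAt (fun y' : EuclideanSpace ℝ (Fin n) => ‖y'‖) (‖y‖⁻¹ • innerSL ℝ y) y := by
  have hu : ‖y‖ ≠ 0 := norm_ne_zero_iff.mpr hy
  have h1 : HasFDerivAt (fun y' : EuclideanSpace ℝ (Fin n) => ‖y'‖ ^ 2)
      (2 • innerSL ℝ y) y := by
    simpa using (hasFDerivAt_id y).norm_sq
  have h2 := h1.sqrt (pow_ne_zero 2 hu)
  have hfn : (fun y' : EuclideanSpace ℝ (Fin n) => Real.sqrt (‖y'‖ ^ 2))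
      = fun y' => ‖y'‖ := by
    funext y'; exact Real.sqrt_sq (norm_nonneg _)
  rw [hfn] at h2
  refine h2.congr_fderiv ?_
  rw [Real.sqrt_sq (norm_nonneg _)]
  ext h
  simp only [ContinuousLinearMap.smul_apply, smul_eq_mul, ContinuousLinearMap.coe_smul',
    Pi.smul_apply, nsmul_eq_mul]
  field_simp
  ring

lemma eval01 (L : ℝ × ℝ →L[ℝ] ℝ) (t : ℝ) : L (0, t) = t * L (0, 1) := by
  have h : ((0, t) : ℝ × ℝ) = t • ((0, 1) : ℝ × ℝ) := by simp
  rw [h, L.map_smul, smul_eq_mul]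

/-- for `G^k = u P y^k + u² Q x^k`, at every point of
`Ω = {(x,y) : y ≠ 0, (‖x‖, ⟨x,y⟩/‖y‖) ∈ W}` we have
`Σ_k ∂G^k/∂y^k = u ((n+1) P + 2 s Q + (r² − s²) Q_s)`. -/
theorem sum_pderiv_sprayG {n : ℕ} (hn : 1 ≤ n)
    (W : Set (ℝ × ℝ)) (hWopen : IsOpen W) (hWsub : W ⊆ {p : ℝ × ℝ | 0 < p.1})
    (P Q : ℝ × ℝ → ℝ) (hP : ContDiffOn ℝ (⊤ : ℕ∞) P W) (hQ : ContDiffOn ℝ (⊤ : ℕ∞) Q W)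
    (x y : EuclideanSpace ℝ (Fin n)) (hy : y ≠ 0)
    (hmem : (‖x‖, ⟪x, y⟫ / ‖y‖) ∈ W) :
    ∑ k, fderiv ℝ (fun y' => sprayG P Q x y' k) y (EuclideanSpace.single k 1) =
      ‖y‖ * ((n + 1) * P (‖x‖, ⟪x, y⟫ / ‖y‖)
        + 2 * (⟪x, y⟫ / ‖y‖) * Q (‖x‖, ⟪x, y⟫ / ‖y‖)
        + (‖x‖ ^ 2 - (⟪x, y⟫ / ‖y‖) ^ 2) * pds Q (‖x‖, ⟪x, y⟫ / ‖y‖)) := by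
  have hu : (0:ℝ) < ‖y‖ := norm_pos_iff.mpr hy
  have hu' : ‖y‖ ≠ 0 := hu.ne'
  have hPd : DifferentiableAt ℝ P (‖x‖, ⟪x, y⟫ / ‖y‖) :=
    (hP.contDiffAt (hWopen.mem_nhds hmem)).differentiableAt (by simp)
  have hQd : DifferentiableAt ℝ Q (‖x‖, ⟪x, y⟫ / ‖y‖) :=
    (hQ.contDiffAt (hWopen.mem_nhds hmem)).differentiableAt (by simp)
  have hN : HasFDerivAt (fun y' : EuclideanSpace ℝ (Fin n) => ‖y'‖)
      (‖y‖⁻¹ • innerSL ℝ y) y := hasFDerivAt_norm' y hy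
  have hV : HasFDerivAt (fun y' : EuclideanSpace ℝ (Fin n) => (⟪x, y'⟫ : ℝ))
      (innerSL ℝ x) y := (innerSL ℝ x).hasFDerivAt
  have hNinv : HasFDerivAt (fun y' : EuclideanSpace ℝ (Fin n) => ‖y'‖⁻¹)
      ((-(‖y‖ ^ 2)⁻¹) • (‖y‖⁻¹ • innerSL ℝ y)) y :=
    (hasDerivAt_inv hu') |>.comp_hasFDerivAt y hN
  have hS : HasFDerivAt (fun y' : EuclideanSpace ℝ (Fin n) => (⟪x, y'⟫ : ℝ) / ‖y'‖)
      ((⟪x, y⟫ : ℝ) • ((-(‖y‖ ^ 2)⁻¹) • (‖y‖⁻¹ • innerSL ℝ y)) + ‖y‖⁻¹ • innerSL ℝ x) y := by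
    simpa only [div_eq_mul_inv, Pi.mul_def] using hV.mul hNinv
  have hφ : HasFDerivAt (fun y' : EuclideanSpace ℝ (Fin n) => ((‖x‖ : ℝ), (⟪x, y'⟫ : ℝ) / ‖y'‖))
      ((0 : EuclideanSpace ℝ (Fin n) →L[ℝ] ℝ).prod
        ((⟪x, y⟫ : ℝ) • ((-(‖y‖ ^ 2)⁻¹) • (‖y‖⁻¹ • innerSL ℝ y)) + ‖y‖⁻¹ • innerSL ℝ x)) y :=
    (hasFDerivAt_const ‖x‖ y).prodMk hS
  have hCP := HasFDerivAt.comp y hPd.hasFDerivAt hφ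
  have hCQ := HasFDerivAt.comp y hQd.hasFDerivAt hφ
  simp only [Function.comp_def] at hCP hCQ
  have key : ∀ k : Fin n,
      fderiv ℝ (fun y' => sprayG P Q x y' k) y (EuclideanSpace.single k 1) =
        ‖y‖ * P (‖x‖, ⟪x, y⟫ / ‖y‖)
          + (P (‖x‖, ⟪x, y⟫ / ‖y‖) * ‖y‖⁻¹
              - pds P (‖x‖, ⟪x, y⟫ / ‖y‖) * ⟪x, y⟫ / ‖y‖ ^ 2) * (y k * y k)
          + (pds P (‖x‖, ⟪x, y⟫ / ‖y‖) + 2 * Q (‖x‖, ⟪x, y⟫ / ‖y‖)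
              - pds Q (‖x‖, ⟪x, y⟫ / ‖y‖) * ⟪x, y⟫ / ‖y‖) * (x k * y k)
          + (‖y‖ * pds Q (‖x‖, ⟪x, y⟫ / ‖y‖)) * (x k * x k) := by
    intro k
    have hproj : HasFDerivAt (fun y' : EuclideanSpace ℝ (Fin n) => y' k)
        (EuclideanSpace.proj k : EuclideanSpace ℝ (Fin n) →L[ℝ] ℝ) y :=
      (EuclideanSpace.proj k : EuclideanSpace ℝ (Fin n) →L[ℝ] ℝ).hasFDerivAt
    have hG := ((hN.mul hCP).mul hproj).add (((hN.mul hN).mul hCQ).mul_const (x k))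
    have hfun : (fun y' : EuclideanSpace ℝ (Fin n) => sprayG P Q x y' k)
        = fun y' : EuclideanSpace ℝ (Fin n) =>
            ‖y'‖ * P (‖x‖, (⟪x, y'⟫ : ℝ) / ‖y'‖) * y' k
            + ‖y'‖ * ‖y'‖ * Q (‖x‖, (⟪x, y'⟫ : ℝ) / ‖y'‖) * x k := by
      funext y'; simp [sprayG, pow_two]
    simp only [Pi.mul_def, Pi.add_def] at hG
    rw [hfun, hG.fderiv]
    have hyk : (innerSL ℝ y) (EuclideanSpace.single k 1) = y k := by
      simp [EuclideanSpace.inner_single_right]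
    have hxk : (innerSL ℝ x) (EuclideanSpace.single k 1) = x k := by
      simp [EuclideanSpace.inner_single_right]
    have hpk : (EuclideanSpace.proj k : EuclideanSpace ℝ (Fin n) →L[ℝ] ℝ)
        (EuclideanSpace.single k 1) = 1 := by
      simp
    simp only [ContinuousLinearMap.add_apply, ContinuousLinearMap.smul_apply,
      ContinuousLinearMap.coe_comp', Function.comp_apply, ContinuousLinearMap.prod_apply,
      ContinuousLinearMap.zero_apply, smul_eq_mul, hyk, hxk, hpk]
    rw [eval01 (fderiv ℝ P (‖x‖, ⟪x, y⟫ / ‖y‖)), eval01 (fderiv ℝ Q (‖x‖, ⟪x, y⟫ / ‖y‖))]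
    show _ = _ + (_ - pds P _ * _ / _) * _ + (pds P _ + _ - pds Q _ * _ / _) * _
      + (_ * pds Q _) * _
    unfold pds
    field_simp
    ring
  have hS1 : ∑ k, y k * y k = ‖y‖ ^ 2 := by
    have h1 : (⟪y, y⟫ : ℝ) = ∑ k, y k * y k := by
      simp only [PiLp.inner_apply, RCLike.inner_apply, conj_trivial]
    rw [← h1, real_inner_self_eq_norm_sq]
  have hS2 : ∑ k, x k * y k = (⟪x, y⟫ : ℝ) := by
    simp [PiLp.inner_apply, RCLike.inner_apply, starRingEnd_apply, star_trivial, mul_comm]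
  have hS3 : ∑ k, x k * x k = ‖x‖ ^ 2 := by
    have h1 : (⟪x, x⟫ : ℝ) = ∑ k, x k * x k := by
      simp only [PiLp.inner_apply, RCLike.inner_apply, conj_trivial]
    rw [← h1, real_inner_self_eq_norm_sq]
  simp only [key]
  rw [Finset.sum_add_distrib, Finset.sum_add_distrib, Finset.sum_add_distrib,
    Finset.sum_const, ← Finset.mul_sum, ← Finset.mul_sum, ← Finset.mul_sum,
    hS1, hS2, hS3, Finset.card_univ, Fintype.card_fin, nsmul_eq_mul]
  field_simp
  ring
end

section
/- Let n ≥ 1, let W ⊆ {(r,s) ∈ ℝ² : r > 0} be open, let P, Q : W → ℝ be smooth, and let Ω = {(x,y) ∈ ℝⁿ × ℝⁿ : y ≠ 0 and (‖x‖, ⟨x,y⟩/‖y‖) ∈ W}. For (x,y) ∈ Ω define G^k(x,y) = u P(r,s) y^k + u² Q(r,s) x^k, where r = ‖x‖, u = ‖y‖, s = ⟨x,y⟩/u, and define the mean Berwald (E-)curvature E_ij = (1/2)·∂²/∂y^i∂y^j (Σ_{k=1}^{n} ∂G^k/∂y^k). Set A = (n+1)P_ss + 2Q_s + (r² − s²)Q_sss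 − 2s Q_ss and B = (n+1)(P − s P_s) + (r² − s²)(Q_s − s Q_ss). Then at every point of Ω and for all i, j, E_ij = (1/2)·[ (A/u)·x^i x^j − (sA/u²)·(x^i y^j + y^i x^j) + ((s²A − B)/u³)·y^i y^j + (B/u)·δ_ij ]. -/
open scoped RealInnerProductSpace

/-- `Σ_k ∂G^k/∂y^k`. -/
noncomputable def divSprayG {n : ℕ} (P Q : ℝ × ℝ → ℝ)
    (x y : EuclideanSpace ℝ (Fin n)) : ℝ :=
  ∑ k, fderiv ℝ (fun y' => sprayG P Q x y' k) y (EuclideanSpace.single k 1)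

/-- The mean Berwald (E-)curvature `E_ij = (1/2) ∂²/∂y^i∂y^j (Σ_k ∂G^k/∂y^k)`. -/
noncomputable def meanBerwald {n : ℕ} (P Q : ℝ × ℝ → ℝ)
    (x y : EuclideanSpace ℝ (Fin n)) (i j : Fin n) : ℝ :=
  (1 / 2) * fderiv ℝ
    (fun y1 => fderiv ℝ (fun y2 => divSprayG P Q x y2) y1 (EuclideanSpace.single j 1))
    y (EuclideanSpace.single i 1)

lemma hasDerivAt_slice {f : ℝ × ℝ → ℝ} {r t : ℝ} (hf : DifferentiableAt ℝ f (r, t)) :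
    HasDerivAt (fun t' => f (r, t')) (pds f (r, t)) t := by
  have hc : HasDerivAt (fun t' : ℝ => ((r : ℝ), t')) ((0 : ℝ), (1 : ℝ)) t :=
    (hasDerivAt_const t r).prodMk (hasDerivAt_id t)
  exact hf.hasFDerivAt.comp_hasDerivAt t hc

lemma contDiffAt_pds {f : ℝ × ℝ → ℝ} {p : ℝ × ℝ} (hf : ContDiffAt ℝ (⊤ : ℕ∞) f p) :
    ContDiffAt ℝ (⊤ : ℕ∞) (pds f) p :=
  (hf.fderiv_right (le_of_eq (by simp))).clm_apply contDiffAt_const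

/-- `F(t) = (n+1)P(r,t) + 2tQ(r,t) + (r²−t²)Q_s(r,t)`. -/
noncomputable def FF (n : ℕ) (P Q : ℝ × ℝ → ℝ) (r t : ℝ) : ℝ :=
  ((n : ℝ) + 1) * P (r, t) + 2 * t * Q (r, t) + (r ^ 2 - t ^ 2) * pds Q (r, t)

noncomputable def FF1 (n : ℕ) (P Q : ℝ × ℝ → ℝ) (r t : ℝ) : ℝ :=
  ((n : ℝ) + 1) * pds P (r, t) + 2 * Q (r, t) + (r ^ 2 - t ^ 2) * pds (pds Q) (r, t)

noncomputable def FF2 (n : ℕ) (P Q : ℝ × ℝ → ℝ) (r t : ℝ) : ℝ :=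
  ((n : ℝ) + 1) * pds (pds P) (r, t) + 2 * pds Q (r, t)
    + (r ^ 2 - t ^ 2) * pds (pds (pds Q)) (r, t) - 2 * t * pds (pds Q) (r, t)

lemma hasDerivAt_FF {n : ℕ} {P Q : ℝ × ℝ → ℝ} {r t : ℝ}
    (hP : ContDiffAt ℝ (⊤ : ℕ∞) P (r, t)) (hQ : ContDiffAt ℝ (⊤ : ℕ∞) Q (r, t)) :
    HasDerivAt (fun t' => FF n P Q r t') (FF1 n P Q r t) t := by
  have hP' := hasDerivAt_slice (hP.differentiableAt (by simp))
  have hQ' := hasDerivAt_slice (hQ.differentiableAt (by simp))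
  have hQs' := hasDerivAt_slice ((contDiffAt_pds hQ).differentiableAt (by simp))
  have h1 : HasDerivAt (fun t' : ℝ => 2 * t') (2 : ℝ) t := by
    simpa using (hasDerivAt_id t).const_mul (2 : ℝ)
  have h2 : HasDerivAt (fun t' : ℝ => r ^ 2 - t' ^ 2) (-(2 * t)) t := by
    simpa using (hasDerivAt_pow 2 t).const_sub (r ^ 2)
  have := ((hP'.const_mul ((n : ℝ) + 1)).add (h1.mul hQ')).add (h2.mul hQs')
  refine this.congr_deriv ?_
  simp only [FF1]; ring

lemma hasDerivAt_FF1 {n : ℕ} {P Q : ℝ × ℝ → ℝ} {r t : ℝ}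
    (hP : ContDiffAt ℝ (⊤ : ℕ∞) P (r, t)) (hQ : ContDiffAt ℝ (⊤ : ℕ∞) Q (r, t)) :
    HasDerivAt (fun t' => FF1 n P Q r t') (FF2 n P Q r t) t := by
  have hPs' := hasDerivAt_slice ((contDiffAt_pds hP).differentiableAt (by simp))
  have hQ' := hasDerivAt_slice (hQ.differentiableAt (by simp))
  have hQss' := hasDerivAt_slice ((contDiffAt_pds (contDiffAt_pds hQ)).differentiableAt (by simp))
  have h2 : HasDerivAt (fun t' : ℝ => r ^ 2 - t' ^ 2) (-(2 * t)) t := by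
    simpa using (hasDerivAt_pow 2 t).const_sub (r ^ 2)
  have := ((hPs'.const_mul ((n : ℝ) + 1)).add (hQ'.const_mul (2 : ℝ))).add (h2.mul hQss')
  refine this.congr_deriv ?_
  simp only [FF2]; ring

lemma hasFDerivAt_norm'_s3 {E : Type*} [NormedAddCommGroup E] [InnerProductSpace ℝ E]
    {y : E} (hy : y ≠ 0) :
    HasFDerivAt (fun z : E => ‖z‖) (‖y‖⁻¹ • innerSL ℝ y) y := by
  have h2 : HasFDerivAt (fun z : E => ‖z‖ ^ 2) (2 • innerSL ℝ y) y :=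
    (hasStrictFDerivAt_norm_sq y).hasFDerivAt
  have hs : HasDerivAt Real.sqrt (1 / (2 * Real.sqrt (‖y‖ ^ 2))) (‖y‖ ^ 2) :=
    Real.hasDerivAt_sqrt (pow_ne_zero 2 (norm_ne_zero_iff.2 hy))
  have h3 := hs.comp_hasFDerivAt y h2
  have heq : (fun z : E => Real.sqrt (‖z‖ ^ 2)) = fun z : E => ‖z‖ := by
    funext z; rw [Real.sqrt_sq (norm_nonneg z)]
  rw [Function.comp_def, heq] at h3
  refine h3.congr_fderiv ?_
  rw [Real.sqrt_sq (norm_nonneg y)]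
  ext z
  simp [smul_smul]
  ring

lemma hasFDerivAt_div' {E : Type*} [NormedAddCommGroup E] [NormedSpace ℝ E]
    {f g : E → ℝ} {f' g' : E →L[ℝ] ℝ} {y : E}
    (hf : HasFDerivAt f f' y) (hg : HasFDerivAt g g' y) (h0 : g y ≠ 0) :
    HasFDerivAt (fun z => f z / g z) ((g y)⁻¹ • f' - (f y / g y ^ 2) • g') y := by
  have hinv : HasFDerivAt (fun z => (g z)⁻¹) ((-(g y ^ 2)⁻¹) • g') y :=
    (hasDerivAt_inv h0).comp_hasFDerivAt y hg
  have h := hf.mul hinv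
  have heq : (fun z => f z / g z) = fun z => f z * (g z)⁻¹ := by
    funext z; rw [div_eq_mul_inv]
  rw [heq]
  refine h.congr_fderiv ?_
  ext z
  simp [ContinuousLinearMap.smul_apply]
  field_simp
  ring

lemma hasFDerivAt_sfun {E : Type*} [NormedAddCommGroup E] [InnerProductSpace ℝ E]
    (x : E) {y : E} (hy : y ≠ 0) :
    HasFDerivAt (fun z : E => ⟪x, z⟫ / ‖z‖)
      (‖y‖⁻¹ • innerSL ℝ x - (⟪x, y⟫ / ‖y‖ ^ 3) • innerSL ℝ y) y := by
  have hu0 : ‖y‖ ≠ 0 := norm_ne_zero_iff.2 hy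
  have hv : HasFDerivAt (fun z : E => ⟪x, z⟫) (innerSL ℝ x) y := (innerSL ℝ x).hasFDerivAt
  have := hasFDerivAt_div' hv (hasFDerivAt_norm'_s3 hy) hu0
  convert this using 2
  rw [smul_smul]
  congr 1
  rw [pow_succ]
  field_simp

lemma hasFDerivAt_coord {n : ℕ} (y : EuclideanSpace ℝ (Fin n)) (k : Fin n) :
    HasFDerivAt (fun z : EuclideanSpace ℝ (Fin n) => z k)
      (EuclideanSpace.proj k : EuclideanSpace ℝ (Fin n) →L[ℝ] ℝ) y :=
  (EuclideanSpace.proj k : EuclideanSpace ℝ (Fin n) →L[ℝ] ℝ).hasFDerivAt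

lemma sum_mul_self {n : ℕ} (y : EuclideanSpace ℝ (Fin n)) :
    ∑ k, y k * y k = ‖y‖ ^ 2 := by
  rw [← real_inner_self_eq_norm_sq]; simp only [PiLp.inner_apply, RCLike.inner_apply, conj_trivial]

lemma sum_mul_inner {n : ℕ} (x y : EuclideanSpace ℝ (Fin n)) :
    ∑ k, x k * y k = ⟪x, y⟫ := by
  simp [PiLp.inner_apply, mul_comm]

lemma divSprayG_eq {n : ℕ} {W : Set (ℝ × ℝ)} (hWopen : IsOpen W)
    {P Q : ℝ × ℝ → ℝ} (hP : ContDiffOn ℝ (⊤ : ℕ∞) P W) (hQ : ContDiffOn ℝ (⊤ : ℕ∞) Q W)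
    (x : EuclideanSpace ℝ (Fin n)) {y : EuclideanSpace ℝ (Fin n)} (hy : y ≠ 0)
    (hm : (‖x‖, ⟪x, y⟫ / ‖y‖) ∈ W) :
    divSprayG P Q x y = ‖y‖ * FF n P Q ‖x‖ (⟪x, y⟫ / ‖y‖) := by
  have hu0 : ‖y‖ ≠ 0 := norm_ne_zero_iff.2 hy
  have hPc : ContDiffAt ℝ (⊤ : ℕ∞) P (‖x‖, ⟪x, y⟫ / ‖y‖) := hP.contDiffAt (hWopen.mem_nhds hm)
  have hQc : ContDiffAt ℝ (⊤ : ℕ∞) Q (‖x‖, ⟪x, y⟫ / ‖y‖) := hQ.contDiffAt (hWopen.mem_nhds hm)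
  have hu := hasFDerivAt_norm'_s3 hy
  have hsf := hasFDerivAt_sfun x hy
  have hPs : HasFDerivAt (fun z : EuclideanSpace ℝ (Fin n) => P (‖x‖, ⟪x, z⟫ / ‖z‖))
      (pds P (‖x‖, ⟪x, y⟫ / ‖y‖) • (‖y‖⁻¹ • innerSL ℝ x - (⟪x, y⟫ / ‖y‖ ^ 3) • innerSL ℝ y)) y := by
    have := (hasDerivAt_slice (hPc.differentiableAt (by simp))).comp_hasFDerivAt y hsf
    simpa [Function.comp_def] using this
  have hQs : HasFDerivAt (fun z : EuclideanSpace ℝ (Fin n) => Q (‖x‖, ⟪x, z⟫ / ‖z‖))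
      (pds Q (‖x‖, ⟪x, y⟫ / ‖y‖) • (‖y‖⁻¹ • innerSL ℝ x - (⟪x, y⟫ / ‖y‖ ^ 3) • innerSL ℝ y)) y := by
    have := (hasDerivAt_slice (hQc.differentiableAt (by simp))).comp_hasFDerivAt y hsf
    simpa [Function.comp_def] using this
  have hfd : ∀ k, fderiv ℝ (fun y' => sprayG P Q x y' k) y (EuclideanSpace.single k 1)
      = ‖y‖ * P (‖x‖, ⟪x, y⟫ / ‖y‖)
        + pds P (‖x‖, ⟪x, y⟫ / ‖y‖) * (x k * y k)
        + (P (‖x‖, ⟪x, y⟫ / ‖y‖) / ‖y‖ - ⟪x, y⟫ * pds P (‖x‖, ⟪x, y⟫ / ‖y‖) / ‖y‖ ^ 2) * (y k * y k)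
        + (‖y‖ * pds Q (‖x‖, ⟪x, y⟫ / ‖y‖)) * (x k * x k)
        + (2 * Q (‖x‖, ⟪x, y⟫ / ‖y‖) - ⟪x, y⟫ * pds Q (‖x‖, ⟪x, y⟫ / ‖y‖) / ‖y‖) * (x k * y k) := by
    intro k
    have hsq : HasFDerivAt (fun z : EuclideanSpace ℝ (Fin n) => ‖z‖ ^ 2)
        (2 • innerSL ℝ y) y := (hasStrictFDerivAt_norm_sq y).hasFDerivAt
    have h : HasFDerivAt (fun y' => sprayG P Q x y' k) _ y :=
      ((hu.mul hPs).mul (hasFDerivAt_coord y k)).add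
        ((hsq.mul hQs).mul_const (x k))
    rw [h.fderiv]
    simp only [ContinuousLinearMap.add_apply, ContinuousLinearMap.smul_apply,
      ContinuousLinearMap.sub_apply, ContinuousLinearMap.coe_smul', Pi.smul_apply,
      innerSL_apply_apply, EuclideanSpace.inner_single_right, PiLp.proj_apply,
      EuclideanSpace.single_apply, smul_eq_mul, map_one, RCLike.star_def, conj_trivial]
    simp only [if_true, nsmul_eq_mul, Nat.cast_ofNat, Pi.mul_apply]
    field_simp
    ring
  rw [divSprayG, Finset.sum_congr rfl (fun k _ => hfd k)]
  simp only [Finset.sum_add_distrib, ← Finset.mul_sum, sum_mul_self, sum_mul_inner,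
    Finset.sum_const, Finset.card_univ, Fintype.card_fin, nsmul_eq_mul]
  rw [FF]
  field_simp
  ring

lemma Uset_open {n : ℕ} {W : Set (ℝ × ℝ)} (hWopen : IsOpen W) (x : EuclideanSpace ℝ (Fin n)) :
    IsOpen {y : EuclideanSpace ℝ (Fin n) | y ≠ 0 ∧ (‖x‖, ⟪x, y⟫ / ‖y‖) ∈ W} := by
  have h1 : IsOpen ({0}ᶜ : Set (EuclideanSpace ℝ (Fin n))) := isOpen_compl_singleton
  have hcont : ContinuousOn (fun y : EuclideanSpace ℝ (Fin n) => ((‖x‖, ⟪x, y⟫ / ‖y‖) : ℝ × ℝ))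
      ({0}ᶜ : Set (EuclideanSpace ℝ (Fin n))) := by
    apply continuousOn_const.prodMk
    exact ContinuousOn.div
      ((continuous_const.inner continuous_id).continuousOn)
      continuous_norm.continuousOn
      (fun z hz => norm_ne_zero_iff.2 hz)
  exact hcont.isOpen_inter_preimage h1 hWopen

lemma fderiv_divSprayG {n : ℕ} {W : Set (ℝ × ℝ)} (hWopen : IsOpen W)
    {P Q : ℝ × ℝ → ℝ} (hP : ContDiffOn ℝ (⊤ : ℕ∞) P W) (hQ : ContDiffOn ℝ (⊤ : ℕ∞) Q W)
    (x : EuclideanSpace ℝ (Fin n)) {y : EuclideanSpace ℝ (Fin n)} (hy : y ≠ 0)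
    (hm : (‖x‖, ⟪x, y⟫ / ‖y‖) ∈ W) (j : Fin n) :
    fderiv ℝ (fun y2 => divSprayG P Q x y2) y (EuclideanSpace.single j 1)
      = FF1 n P Q ‖x‖ (⟪x, y⟫ / ‖y‖) * (x j - (⟪x, y⟫ / ‖y‖) * (y j / ‖y‖))
        + FF n P Q ‖x‖ (⟪x, y⟫ / ‖y‖) * (y j / ‖y‖) := by
  have hu0 : ‖y‖ ≠ 0 := norm_ne_zero_iff.2 hy
  have hPc : ContDiffAt ℝ (⊤ : ℕ∞) P (‖x‖, ⟪x, y⟫ / ‖y‖) := hP.contDiffAt (hWopen.mem_nhds hm)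
  have hQc : ContDiffAt ℝ (⊤ : ℕ∞) Q (‖x‖, ⟪x, y⟫ / ‖y‖) := hQ.contDiffAt (hWopen.mem_nhds hm)
  have hev : (fun y2 => divSprayG P Q x y2)
      =ᶠ[nhds y] (fun y2 => ‖y2‖ * FF n P Q ‖x‖ (⟪x, y2⟫ / ‖y2‖)) :=
    Filter.eventuallyEq_of_mem ((Uset_open hWopen x).mem_nhds ⟨hy, hm⟩)
      (fun z hz => divSprayG_eq hWopen hP hQ x hz.1 hz.2)
  rw [hev.fderiv_eq]
  have hu := hasFDerivAt_norm'_s3 hy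
  have hsf := hasFDerivAt_sfun x hy
  have hFs : HasFDerivAt (fun z : EuclideanSpace ℝ (Fin n) => FF n P Q ‖x‖ (⟪x, z⟫ / ‖z‖))
      (FF1 n P Q ‖x‖ (⟪x, y⟫ / ‖y‖) •
        (‖y‖⁻¹ • innerSL ℝ x - (⟪x, y⟫ / ‖y‖ ^ 3) • innerSL ℝ y)) y := by
    have := (hasDerivAt_FF (n := n) hPc hQc).comp_hasFDerivAt y hsf
    simpa [Function.comp_def] using this
  have h : HasFDerivAt (fun y2 => ‖y2‖ * FF n P Q ‖x‖ (⟪x, y2⟫ / ‖y2‖)) _ y := hu.mul hFs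
  rw [h.fderiv]
  simp only [ContinuousLinearMap.add_apply, ContinuousLinearMap.smul_apply,
    ContinuousLinearMap.sub_apply, innerSL_apply_apply, EuclideanSpace.inner_single_right,
    smul_eq_mul, map_one, RCLike.star_def, conj_trivial]
  field_simp


set_option maxHeartbeats 2000000 in
/-- with `A = (n+1)P_ss + 2Q_s + (r²−s²)Q_sss − 2s Q_ss` and
`B = (n+1)(P − s P_s) + (r²−s²)(Q_s − s Q_ss)`, at every point of `Ω` and for all `i, j`,
`E_ij = (1/2)((A/u) x^i x^j − (sA/u²)(x^i y^j + y^i x^j) + ((s²A − B)/u³) y^i y^j + (B/u) δ_ij)`. -/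
theorem meanBerwald_eq {n : ℕ} (hn : 1 ≤ n)
    (W : Set (ℝ × ℝ)) (hWopen : IsOpen W) (hWsub : W ⊆ {p : ℝ × ℝ | 0 < p.1})
    (P Q : ℝ × ℝ → ℝ) (hP : ContDiffOn ℝ (⊤ : ℕ∞) P W) (hQ : ContDiffOn ℝ (⊤ : ℕ∞) Q W)
    (x y : EuclideanSpace ℝ (Fin n)) (hy : y ≠ 0)
    (hmem : (‖x‖, ⟪x, y⟫ / ‖y‖) ∈ W) (i j : Fin n)
    (A B : ℝ)
    (hA : A = (n + 1) * pds (pds P) (‖x‖, ⟪x, y⟫ / ‖y‖)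
        + 2 * pds Q (‖x‖, ⟪x, y⟫ / ‖y‖)
        + (‖x‖ ^ 2 - (⟪x, y⟫ / ‖y‖) ^ 2) * pds (pds (pds Q)) (‖x‖, ⟪x, y⟫ / ‖y‖)
        - 2 * (⟪x, y⟫ / ‖y‖) * pds (pds Q) (‖x‖, ⟪x, y⟫ / ‖y‖))
    (hB : B = (n + 1) * (P (‖x‖, ⟪x, y⟫ / ‖y‖)
          - (⟪x, y⟫ / ‖y‖) * pds P (‖x‖, ⟪x, y⟫ / ‖y‖))
        + (‖x‖ ^ 2 - (⟪x, y⟫ / ‖y‖) ^ 2) *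
          (pds Q (‖x‖, ⟪x, y⟫ / ‖y‖)
            - (⟪x, y⟫ / ‖y‖) * pds (pds Q) (‖x‖, ⟪x, y⟫ / ‖y‖))) :
    meanBerwald P Q x y i j =
      (1 / 2) * ((A / ‖y‖) * (x i * x j)
        - ((⟪x, y⟫ / ‖y‖) * A / ‖y‖ ^ 2) * (x i * y j + y i * x j)
        + (((⟪x, y⟫ / ‖y‖) ^ 2 * A - B) / ‖y‖ ^ 3) * (y i * y j)
        + (B / ‖y‖) * (if i = j then (1 : ℝ) else 0)) := by
  have hu0 : ‖y‖ ≠ 0 := norm_ne_zero_iff.2 hy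
  have hPc : ContDiffAt ℝ (⊤ : ℕ∞) P (‖x‖, ⟪x, y⟫ / ‖y‖) := hP.contDiffAt (hWopen.mem_nhds hmem)
  have hQc : ContDiffAt ℝ (⊤ : ℕ∞) Q (‖x‖, ⟪x, y⟫ / ‖y‖) := hQ.contDiffAt (hWopen.mem_nhds hmem)
  have hev2 : (fun y1 => fderiv ℝ (fun y2 => divSprayG P Q x y2) y1 (EuclideanSpace.single j 1))
      =ᶠ[nhds y] (fun y1 =>
        FF1 n P Q ‖x‖ (⟪x, y1⟫ / ‖y1‖) * (x j - (⟪x, y1⟫ / ‖y1‖) * (y1 j / ‖y1‖))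
          + FF n P Q ‖x‖ (⟪x, y1⟫ / ‖y1‖) * (y1 j / ‖y1‖)) :=
    Filter.eventuallyEq_of_mem ((Uset_open hWopen x).mem_nhds ⟨hy, hmem⟩)
      (fun z hz => fderiv_divSprayG hWopen hP hQ x hz.1 hz.2 j)
  rw [meanBerwald, hev2.fderiv_eq]
  have hu := hasFDerivAt_norm'_s3 hy
  have hsf := hasFDerivAt_sfun x hy
  have hj := hasFDerivAt_coord y j
  have hq : HasFDerivAt (fun z : EuclideanSpace ℝ (Fin n) => z j / ‖z‖)
      (‖y‖⁻¹ • (EuclideanSpace.proj j : EuclideanSpace ℝ (Fin n) →L[ℝ] ℝ)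
        - (y j / ‖y‖ ^ 2) • (‖y‖⁻¹ • innerSL ℝ y)) y := hasFDerivAt_div' hj hu hu0
  have hF1s : HasFDerivAt (fun z : EuclideanSpace ℝ (Fin n) => FF1 n P Q ‖x‖ (⟪x, z⟫ / ‖z‖))
      (FF2 n P Q ‖x‖ (⟪x, y⟫ / ‖y‖) •
        (‖y‖⁻¹ • innerSL ℝ x - (⟪x, y⟫ / ‖y‖ ^ 3) • innerSL ℝ y)) y := by
    have := (hasDerivAt_FF1 (n := n) hPc hQc).comp_hasFDerivAt y hsf
    simpa [Function.comp_def] using this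
  have hFs : HasFDerivAt (fun z : EuclideanSpace ℝ (Fin n) => FF n P Q ‖x‖ (⟪x, z⟫ / ‖z‖))
      (FF1 n P Q ‖x‖ (⟪x, y⟫ / ‖y‖) •
        (‖y‖⁻¹ • innerSL ℝ x - (⟪x, y⟫ / ‖y‖ ^ 3) • innerSL ℝ y)) y := by
    have := (hasDerivAt_FF (n := n) hPc hQc).comp_hasFDerivAt y hsf
    simpa [Function.comp_def] using this
  have hconst : HasFDerivAt (fun _ : EuclideanSpace ℝ (Fin n) => x j)
      (0 : EuclideanSpace ℝ (Fin n) →L[ℝ] ℝ) y := hasFDerivAt_const (x j) y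
  have hg : HasFDerivAt (fun y1 : EuclideanSpace ℝ (Fin n) =>
      FF1 n P Q ‖x‖ (⟪x, y1⟫ / ‖y1‖) * (x j - (⟪x, y1⟫ / ‖y1‖) * (y1 j / ‖y1‖))
        + FF n P Q ‖x‖ (⟪x, y1⟫ / ‖y1‖) * (y1 j / ‖y1‖)) _ y := (hF1s.mul (hconst.sub (hsf.mul hq))).add (hFs.mul hq)
  rw [hg.fderiv]
  simp only [ContinuousLinearMap.add_apply, ContinuousLinearMap.smul_apply,
    ContinuousLinearMap.sub_apply, ContinuousLinearMap.zero_apply, innerSL_apply_apply,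
    EuclideanSpace.inner_single_right, PiLp.proj_apply, EuclideanSpace.single_apply,
    smul_eq_mul, map_one, RCLike.star_def, conj_trivial, Pi.mul_apply, Pi.sub_apply]
  have hAeq : A = FF2 n P Q ‖x‖ (⟪x, y⟫ / ‖y‖) := by
    rw [hA, FF2]
  have hBeq : B = FF n P Q ‖x‖ (⟪x, y⟫ / ‖y‖)
      - (⟪x, y⟫ / ‖y‖) * FF1 n P Q ‖x‖ (⟪x, y⟫ / ‖y‖) := by
    rw [hB, FF, FF1]; push_cast; ring
  rw [hAeq, hBeq]
  rcases eq_or_ne i j with rfl | hij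
  · simp only [if_pos rfl]
    field_simp
    ring
  · simp only [if_neg hij, if_neg (Ne.symm hij)]
    field_simp
    ring
end

section
/- Let I ⊆ (0,∞) and J ⊆ ℝ be open intervals with 0 ∉ J, let U = I × J, let k : I → ℝ be a function with 1 + k(r)·s² > 0 for all (r,s) ∈ U, and let ψ : U → (0,∞) be a C² function satisfying, at every point (r,s) ∈ U, the two equations 2 r s k(r) ψ − s ψ_r − r ψ_s = 0 and r ψ_ss + s ψ_rs − ψ_r = 0. Then there exists a function k₂ : I → (0,∞) such that ψ(r,s) = k₂(r)·√(1 + k(r)·s²) for all (r,s) ∈ U. -/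
/-!
Differentiating `2 r s k ψ - s ψ_r - r ψ_s = 0` in `s` and adding `r ψ_ss + s ψ_rs - ψ_r = 0`
eliminates the second derivatives and gives `ψ_r = r k ψ + r s k ψ_s`; substituting this back
into the first equation leaves `r ((1 + k s²) ψ_s - k s ψ) = 0`. Since `r > 0`, every slice
`s ↦ ψ(r, s) / √(1 + k(r) s²)` has zero derivative on the interval `J`, hence is a positive
constant `k₂(r)`.
-/

/-- Partial derivative in the first variable `r` of a function on `ℝ × ℝ`. -/
noncomputable def pdr (f : ℝ × ℝ → ℝ) (p : ℝ × ℝ) : ℝ := fderiv ℝ f p (1, 0)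

open Filter Topology

theorem ContDiffAt.differentiableAt_fderiv_apply {𝕜 E F : Type*} [NontriviallyNormedField 𝕜]
    [NormedAddCommGroup E] [NormedSpace 𝕜 E] [NormedAddCommGroup F] [NormedSpace 𝕜 F]
    {f : E → F} {x : E} (hf : ContDiffAt 𝕜 2 f x) (v : E) :
    DifferentiableAt 𝕜 (fun y => fderiv 𝕜 f y v) x :=
  ((hf.fderiv_right (by norm_num)).clm_apply contDiffAt_const).differentiableAt one_ne_zero

theorem hasDerivAt_pds {F : ℝ × ℝ → ℝ} {r s : ℝ} (hF : DifferentiableAt ℝ F (r, s)) :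
    HasDerivAt (fun t => F (r, t)) (pds F (r, s)) s := by
  have hline : HasDerivAt (fun t : ℝ => (r, t)) ((0 : ℝ), (1 : ℝ)) s :=
    (hasDerivAt_const s r).prodMk (hasDerivAt_id s)
  simpa [pds, Function.comp_def] using hF.hasFDerivAt.comp_hasDerivAt s hline

theorem pds_mul_one_add_mul_sq_eq {ψ : ℝ × ℝ → ℝ} {k : ℝ → ℝ} {r s : ℝ} (hr : r ≠ 0)
    (hψ : DifferentiableAt ℝ ψ (r, s)) (hψr : DifferentiableAt ℝ (pdr ψ) (r, s))
    (hψs : DifferentiableAt ℝ (pds ψ) (r, s))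
    (heq1 : ∀ᶠ t in 𝓝 s, 2 * r * t * k r * ψ (r, t) - t * pdr ψ (r, t) - r * pds ψ (r, t) = 0)
    (heq2 : r * pds (pds ψ) (r, s) + s * pds (pdr ψ) (r, s) - pdr ψ (r, s) = 0) :
    pds ψ (r, s) * (1 + k r * s ^ 2) = k r * s * ψ (r, s) := by
  have hderiv : HasDerivAt
      (fun t => 2 * r * t * k r * ψ (r, t) - t * pdr ψ (r, t) - r * pds ψ (r, t))
      (2 * r * k r * ψ (r, s) + 2 * r * s * k r * pds ψ (r, s)
        - (pdr ψ (r, s) + s * pds (pdr ψ) (r, s)) - r * pds (pds ψ) (r, s)) s := by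
    have hlin : HasDerivAt (fun t : ℝ => 2 * r * t * k r) (2 * r * k r) s := by
      simpa using ((hasDerivAt_id s).const_mul (2 * r)).mul_const (k r)
    have hmid := (hasDerivAt_id' s).mul (hasDerivAt_pds hψr)
    rw [one_mul] at hmid
    exact ((hlin.mul (hasDerivAt_pds hψ)).sub hmid).sub ((hasDerivAt_pds hψs).const_mul r)
  have hdiff_eq1 : 2 * r * k r * ψ (r, s) + 2 * r * s * k r * pds ψ (r, s)
      - (pdr ψ (r, s) + s * pds (pdr ψ) (r, s)) - r * pds (pds ψ) (r, s) = 0 :=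
    hderiv.unique ((hasDerivAt_const s 0).congr_of_eventuallyEq heq1)
  have hfactor : r * (pds ψ (r, s) * (1 + k r * s ^ 2) - k r * s * ψ (r, s)) = 0 := by
    linear_combination -heq1.self_of_nhds + (s / 2) * hdiff_eq1 + (s / 2) * heq2
  exact sub_eq_zero.mp ((mul_eq_zero.mp hfactor).resolve_left hr)

theorem hasDerivAt_div_sqrt_one_add_mul_sq {f : ℝ → ℝ} {f' c u : ℝ} (hf : HasDerivAt f f' u)
    (hpos : 0 < 1 + c * u ^ 2) (hode : f' * (1 + c * u ^ 2) = c * u * f u) :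
    HasDerivAt (fun v => f v / √(1 + c * v ^ 2)) 0 u := by
  have hq : HasDerivAt (fun v : ℝ => 1 + c * v ^ 2) (2 * c * u) u := by
    simpa [mul_comm, mul_left_comm] using ((hasDerivAt_pow 2 u).const_mul c).const_add 1
  have hsqrt_pos : 0 < √(1 + c * u ^ 2) := Real.sqrt_pos.mpr hpos
  refine (hf.div (hq.sqrt hpos.ne') hsqrt_pos.ne').congr_deriv ?_
  rw [div_eq_zero_iff, sub_eq_zero]
  left
  field_simp
  linear_combination f' * Real.sq_sqrt hpos.le + hode

theorem psi_eq_k2_mul_sqrt_general (I J : Set ℝ)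
    (hIopen : IsOpen I)
    (hJopen : IsOpen J) (hJconn : IsPreconnected J)
    (hIsub : I ⊆ Set.Ioi (0 : ℝ))
    (k : ℝ → ℝ) (hk : ∀ p ∈ I ×ˢ J, 0 < 1 + k p.1 * p.2 ^ 2)
    (ψ : ℝ × ℝ → ℝ) (hψ : ContDiffOn ℝ 2 ψ (I ×ˢ J))
    (hψpos : ∀ p ∈ I ×ˢ J, 0 < ψ p)
    (heq1 : ∀ p ∈ I ×ˢ J,
      2 * p.1 * p.2 * k p.1 * ψ p - p.2 * pdr ψ p - p.1 * pds ψ p = 0)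
    (heq2 : ∀ p ∈ I ×ˢ J,
      p.1 * pds (pds ψ) p + p.2 * pds (pdr ψ) p - pdr ψ p = 0) :
    ∃ k₂ : ℝ → ℝ, (∀ r ∈ I, 0 < k₂ r) ∧
      ∀ p ∈ I ×ˢ J, ψ p = k₂ p.1 * Real.sqrt (1 + k p.1 * p.2 ^ 2) := by
  have hC2 : ∀ p ∈ I ×ˢ J, ContDiffAt ℝ 2 ψ p := fun p hp =>
    hψ.contDiffAt ((hIopen.prod hJopen).mem_nhds hp)
  have hslice : ∀ r ∈ I, ∀ s ∈ J,
      HasDerivAt (fun t => ψ (r, t) / √(1 + k r * t ^ 2)) 0 s := by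
    intro r hr s hs
    have hrs : (r, s) ∈ I ×ˢ J := ⟨hr, hs⟩
    have hψ' := (hC2 _ hrs).differentiableAt (by norm_num)
    refine hasDerivAt_div_sqrt_one_add_mul_sq (hasDerivAt_pds hψ') (hk _ hrs) ?_
    refine pds_mul_one_add_mul_sq_eq (hIsub hr).ne' hψ'
      ((hC2 _ hrs).differentiableAt_fderiv_apply _) ((hC2 _ hrs).differentiableAt_fderiv_apply _)
      ?_ (heq2 _ hrs)
    filter_upwards [hJopen.mem_nhds hs] with t ht using heq1 (r, t) ⟨hr, ht⟩
  have hconst : ∀ r ∈ I, ∀ s ∈ J, ∀ t ∈ J,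
      ψ (r, s) / √(1 + k r * s ^ 2) = ψ (r, t) / √(1 + k r * t ^ 2) :=
    fun r hr s hs t ht => hJopen.is_const_of_deriv_eq_zero hJconn
      (fun u hu => (hslice r hr u hu).differentiableAt.differentiableWithinAt)
      (fun u hu => (hslice r hr u hu).deriv) hs ht
  rcases J.eq_empty_or_nonempty with rfl | ⟨s₀, hs₀⟩
  · exact ⟨fun _ => 1, fun _ _ => one_pos, by simp⟩
  refine ⟨fun r => ψ (r, s₀) / √(1 + k r * s₀ ^ 2),
    fun r hr => div_pos (hψpos (r, s₀) ⟨hr, hs₀⟩) (Real.sqrt_pos.mpr (hk (r, s₀) ⟨hr, hs₀⟩)), ?_⟩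
  rintro ⟨r, s⟩ ⟨hr, hs⟩
  have hsqrt_pos : 0 < √(1 + k r * s ^ 2) := Real.sqrt_pos.mpr (hk (r, s) ⟨hr, hs⟩)
  show ψ (r, s) = ψ (r, s₀) / √(1 + k r * s₀ ^ 2) * √(1 + k r * s ^ 2)
  rw [← hconst r hr s hs s₀ hs₀, div_mul_cancel₀ _ hsqrt_pos.ne']

/-- a positive `C²` solution `ψ` of
`2 r s k(r) ψ − s ψ_r − r ψ_s = 0` and `r ψ_ss + s ψ_rs − ψ_r = 0` on
`U = I × J` (with `I ⊆ (0,∞)`, `0 ∉ J` open intervals, and `1 + k(r) s² > 0` on `U`)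
has the form `ψ(r,s) = k₂(r) √(1 + k(r) s²)` for some `k₂ : I → (0,∞)`. -/
theorem psi_eq_k2_mul_sqrt (I J : Set ℝ)
    (hIopen : IsOpen I) (hIconn : IsPreconnected I)
    (hJopen : IsOpen J) (hJconn : IsPreconnected J)
    (hIsub : I ⊆ Set.Ioi (0 : ℝ)) (hJ0 : (0 : ℝ) ∉ J)
    (k : ℝ → ℝ) (hk : ∀ p ∈ I ×ˢ J, 0 < 1 + k p.1 * p.2 ^ 2)
    (ψ : ℝ × ℝ → ℝ) (hψ : ContDiffOn ℝ 2 ψ (I ×ˢ J))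
    (hψpos : ∀ p ∈ I ×ˢ J, 0 < ψ p)
    (heq1 : ∀ p ∈ I ×ˢ J,
      2 * p.1 * p.2 * k p.1 * ψ p - p.2 * pdr ψ p - p.1 * pds ψ p = 0)
    (heq2 : ∀ p ∈ I ×ˢ J,
      p.1 * pds (pds ψ) p + p.2 * pds (pdr ψ) p - pdr ψ p = 0) :
    ∃ k₂ : ℝ → ℝ, (∀ r ∈ I, 0 < k₂ r) ∧
      ∀ p ∈ I ×ˢ J, ψ p = k₂ p.1 * Real.sqrt (1 + k p.1 * p.2 ^ 2) :=
  psi_eq_k2_mul_sqrt_general I J hIopen hJopen hJconn hIsub k hk ψ hψ hψpos heq1 heq2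
end
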